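/- The function f(α) = ((1-2α)/2) ln((1-α)/α) / (Φ⁻¹(α))² tends to 2/π as α → (1/2)⁻. -/

import Mathlib

open Real Set Filter Topology

noncomputable def phi (y : ℝ) : ℝ := (Real.sqrt (2 * Real.pi))⁻¹ * Real.exp (-y ^ 2 / 2)

noncomputable def Phi (x : ℝ) : ℝ := ∫ y in Set.Iic x, phi y

noncomputable def PhiInv (a : ℝ) : ℝ := Function.invFun Phi a

/-!
Substitute `α = Φ x`: since `Φ` is a continuous strictly increasing bijection onto its range with
`Φ 0 = 1/2`, the filter `𝓝[<] (1/2)` is the image of `𝓝[<] 0` under `Φ`, and `Φ⁻¹ (Φ x) = x`.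
The numerator then becomes the product of `(1 - 2 Φ x) / 2` and `log ((1 - Φ x) / Φ x)`, two
functions vanishing at `0` with derivatives `-φ 0` and `-4 φ 0`, so dividing by `x ^ 2` gives
`4 φ(0) ^ 2 = 2 / π` in the limit.
-/

open MeasureTheory ProbabilityTheory

theorem StrictMono.map_nhdsLT {α β : Type*} [ConditionallyCompleteLinearOrder α]
    [DenselyOrdered α] [NoMinOrder α] [TopologicalSpace α] [OrderTopology α] [LinearOrder β]
    [TopologicalSpace β] [OrderTopology β] {f : α → β} (hf : StrictMono f) (hc : Continuous f)
    (a : α) : map f (𝓝[<] a) = 𝓝[<] (f a) := by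
  refine le_antisymm (hc.continuousWithinAt.tendsto_nhdsWithin fun x hx => hf hx) fun t ht => ?_
  obtain ⟨b, hba, hb⟩ := (nhdsLT_basis a).mem_iff.1 ht
  have hivt : Ioo (f b) (f a) ⊆ f '' Ioo b a :=
    intermediate_value_Ioo hba.le hc.continuousOn
  exact mem_of_superset (Ioo_mem_nhdsLT (hf hba)) (hivt.trans (image_subset_iff.2 hb))

theorem tendsto_mul_div_sq_of_hasDerivAt {𝕜 : Type*} [NontriviallyNormedField 𝕜] {f g : 𝕜 → 𝕜}
    {a b : 𝕜} (hf : HasDerivAt f a 0) (hg : HasDerivAt g b 0) (hf0 : f 0 = 0) (hg0 : g 0 = 0) :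
    Tendsto (fun x => f x * g x / x ^ 2) (𝓝[≠] 0) (𝓝 (a * b)) := by
  have hf' := hasDerivAt_iff_tendsto_slope_zero.1 hf
  have hg' := hasDerivAt_iff_tendsto_slope_zero.1 hg
  refine (hf'.mul hg').congr fun x => ?_
  simp only [zero_add, hf0, hg0, sub_zero, smul_eq_mul]
  ring

theorem hasDerivAt_integral_Iic {f : ℝ → ℝ} (hi : Integrable f) (hc : Continuous f) (x : ℝ) :
    HasDerivAt (fun u => ∫ y in Iic u, f y) (f x) x := by
  have hsub : ∀ u, ∫ y in Iic u, f y = (∫ y in Iic 0, f y) + ∫ y in 0..u, f y := fun u =>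
    eq_add_of_sub_eq' (intervalIntegral.integral_Iic_sub_Iic hi.integrableOn hi.integrableOn)
  exact ((intervalIntegral.integral_hasDerivAt_right hi.intervalIntegrable
    hc.aestronglyMeasurable.stronglyMeasurableAtFilter hc.continuousAt).const_add _)
    |>.congr_of_eventuallyEq (Eventually.of_forall hsub)

theorem integral_Iic_zero_of_even {f : ℝ → ℝ} (hi : Integrable f) (heven : ∀ y, f (-y) = f y) :
    ∫ y in Iic 0, f y = (∫ y, f y) / 2 := by
  have hsymm : ∫ y in Ioi 0, f y = ∫ y in Iic 0, f y := by
    simpa [heven] using (integral_comp_neg_Iic 0 f).symm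
  have hsplit := intervalIntegral.integral_Iic_add_Ioi (b := 0) hi.integrableOn hi.integrableOn
  linarith

theorem phi_eq_gaussianPDFReal : phi = gaussianPDFReal 0 1 := by
  ext y
  simp [phi, gaussianPDFReal]

theorem integrable_phi : Integrable phi := by
  rw [phi_eq_gaussianPDFReal]
  exact integrable_gaussianPDFReal 0 1

theorem continuous_phi : Continuous phi := by
  unfold phi
  fun_prop

theorem phi_zero : phi 0 = (√(2 * π))⁻¹ := by
  simp [phi]

theorem hasDerivAt_Phi (x : ℝ) : HasDerivAt Phi (phi x) x :=
  hasDerivAt_integral_Iic integrable_phi continuous_phi x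

theorem continuous_Phi : Continuous Phi :=
  continuous_iff_continuousAt.2 fun x => (hasDerivAt_Phi x).continuousAt

theorem strictMono_Phi : StrictMono Phi :=
  strictMono_of_deriv_pos fun x => by
    rw [(hasDerivAt_Phi x).deriv, phi_eq_gaussianPDFReal]
    exact gaussianPDFReal_pos 0 1 x one_ne_zero

theorem Phi_zero : Phi 0 = 1 / 2 := by
  rw [Phi, integral_Iic_zero_of_even integrable_phi fun y => by simp [phi],
    phi_eq_gaussianPDFReal, integral_gaussianPDFReal_eq_one 0 one_ne_zero]

theorem PhiInv_Phi (x : ℝ) : PhiInv (Phi x) = x :=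
  Function.leftInverse_invFun strictMono_Phi.injective x

theorem tendsto_Phi_mul_log_div_sq :
    Tendsto (fun x => (1 - 2 * Phi x) / 2 * log ((1 - Phi x) / Phi x) / x ^ 2)
      (𝓝[<] 0) (𝓝 (2 / π)) := by
  have hlin : HasDerivAt (fun x => (1 - 2 * Phi x) / 2) (-phi 0) 0 := by
    exact (((hasDerivAt_Phi 0).const_mul 2).const_sub 1).div_const 2 |>.congr_deriv (by ring)
  -- `p ↦ log ((1 - p) / p)` has derivative `-1 / (p (1 - p)) = -4` at `p = 1 / 2`.
  have hlog : HasDerivAt (fun x => log ((1 - Phi x) / Phi x)) (-4 * phi 0) 0 := by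
    refine (((hasDerivAt_Phi 0).const_sub 1).div (hasDerivAt_Phi 0)
      (by norm_num [Phi_zero])).log (by norm_num [Phi_zero]) |>.congr_deriv ?_
    norm_num [Phi_zero]
    ring
  have hprod := (tendsto_mul_div_sq_of_hasDerivAt hlin hlog (by norm_num [Phi_zero])
    (by norm_num [Phi_zero])).mono_left (nhdsLT_le_nhdsNE 0)
  convert hprod using 2
  rw [phi_zero]
  field_simp
  rw [sq_sqrt (by positivity)]
  ring

theorem f_limit_half :
    Filter.Tendsto
      (fun α : ℝ => ((1 - 2 * α) / 2 * Real.log ((1 - α) / α)) / (PhiInv α) ^ 2)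
      (𝓝[<] (1 / 2)) (𝓝 (2 / Real.pi)) := by
  rw [← Phi_zero, ← strictMono_Phi.map_nhdsLT continuous_Phi, tendsto_map'_iff]
  simpa only [Function.comp_def, PhiInv_Phi] using tendsto_Phi_mul_log_div_sq
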